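/- Let Y ∈ ℝ^{m×k} be a matrix with full column rank and QR decomposition Y = U₁R with U₁ having orthonormal columns and R ∈ ℝ^{k×k} invertible. Then for any row index set J such that Y(J,:) has full column rank, ‖U₁(J,:)†‖ ≤ ‖Y(J,:)†‖ · ‖Y‖. -/

import Mathlib

open Matrix

noncomputable def specNorm {m n : Type*} [Fintype m] [Fintype n] [DecidableEq n]
    (A : Matrix m n ℝ) : ℝ :=
  ‖LinearMap.toContinuousLinearMap (Matrix.toEuclideanLin A)‖

noncomputable def sMin {m n : Type*} [Fintype m] [Fintype n] [DecidableEq n]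
    (A : Matrix m n ℝ) : ℝ :=
  Real.sqrt (⨅ i, (show (Aᵀ * A).IsHermitian by simpa [Matrix.conjTranspose_eq_transpose_of_trivial] using Matrix.isHermitian_conjTranspose_mul_self A).eigenvalues i)

noncomputable def singVals {m n : ℕ} (A : Matrix (Fin m) (Fin n) ℝ) : Fin n → ℝ :=
  fun i =>
    Real.sqrt ((show (Aᵀ * A).IsHermitian by simpa [Matrix.conjTranspose_eq_transpose_of_trivial] using Matrix.isHermitian_conjTranspose_mul_self A).eigenvalues
      (Tuple.sort (show (Aᵀ * A).IsHermitian by simpa [Matrix.conjTranspose_eq_transpose_of_trivial] using Matrix.isHermitian_conjTranspose_mul_self A).eigenvalues i.rev))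

noncomputable def pinv {m n : Type*} [Fintype m] [Fintype n] (A : Matrix m n ℝ) : Matrix n m ℝ :=
  open Classical in
  if h : ∃ B : Matrix n m ℝ,
      A * B * A = A ∧ B * A * B = B ∧ (A * B)ᵀ = A * B ∧ (B * A)ᵀ = B * A
  then h.choose else 0

/-!
Since `Y = U1 * R`, the rows satisfy `Y(J,:) = U1(J,:) * R`. When `Y(J,:)` has full column rank,
`B = Y(J,:)†` is a left inverse of it with `Y(J,:) * B` symmetric, and then `R * B` satisfies the
Penrose equations for `U1(J,:)`, so `U1(J,:)† = R * Y(J,:)†`. As `U1` has orthonormal columns,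
`‖R‖ = ‖U1 * R‖ = ‖Y‖`, and submultiplicativity of the spectral norm gives the bound.
-/
section PseudoInverse

variable {m n : Type*} [Fintype m] [Fintype n]

theorem pinv_eq_of_penrose {A : Matrix m n ℝ} {B : Matrix n m ℝ}
    (h₁ : A * B * A = A) (h₂ : B * A * B = B) (h₃ : (A * B)ᵀ = A * B)
    (h₄ : (B * A)ᵀ = B * A) : pinv A = B := by
  have hex : ∃ B : Matrix n m ℝ,
      A * B * A = A ∧ B * A * B = B ∧ (A * B)ᵀ = A * B ∧ (B * A)ᵀ = B * A :=
    ⟨B, h₁, h₂, h₃, h₄⟩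
  rw [pinv, dif_pos hex]
  obtain ⟨c₁, c₂, c₃, c₄⟩ := hex.choose_spec
  set C := hex.choose
  have hAC : A * C = A * B :=
    calc A * C = (A * B)ᵀ * (A * C)ᵀ := by rw [h₃, c₃, ← Matrix.mul_assoc, h₁]
      _ = (A * C * A * B)ᵀ := by rw [← transpose_mul]; simp only [Matrix.mul_assoc]
      _ = A * B := by rw [c₁, h₃]
  have hCA : C * A = B * A :=
    calc C * A = (C * A)ᵀ * (B * A)ᵀ := by
          rw [c₄, h₄, Matrix.mul_assoc, ← Matrix.mul_assoc A, h₁]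
      _ = (B * (A * C * A))ᵀ := by rw [← transpose_mul]; simp only [Matrix.mul_assoc]
      _ = B * A := by rw [c₁, h₄]
  calc C = C * A * C := c₂.symm
    _ = B * (A * B) := by rw [hCA, Matrix.mul_assoc, hAC]
    _ = B := by rw [← Matrix.mul_assoc, h₂]

variable [DecidableEq n]

theorem pinv_eq_of_mul_eq_one {A : Matrix m n ℝ} {B : Matrix n m ℝ} (hBA : B * A = 1)
    (hAB : (A * B)ᵀ = A * B) : pinv A = B :=
  pinv_eq_of_penrose (by rw [Matrix.mul_assoc, hBA, Matrix.mul_one])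
    (by rw [hBA, Matrix.one_mul]) hAB (by rw [hBA, transpose_one])

theorem pinv_eq_mul_of_mul_mul_eq_one {U : Matrix m n ℝ} {R : Matrix n n ℝ} {B : Matrix n m ℝ}
    (hB : B * (U * R) = 1) (hUB : (U * R * B)ᵀ = U * R * B) : pinv U = R * B := by
  -- `B * U` is a left, hence also a right, inverse of the square matrix `R`.
  have hRB : R * B * U = 1 := by
    rwa [Matrix.mul_assoc, mul_eq_one_comm, Matrix.mul_assoc]
  exact pinv_eq_of_mul_eq_one hRB (by rwa [← Matrix.mul_assoc])

end PseudoInverse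

theorem Matrix.isUnit_of_rank_eq_card {n K : Type*} [Fintype n] [DecidableEq n] [Field K]
    {M : Matrix n n K} (h : M.rank = Fintype.card n) : IsUnit M := by
  rw [← mulVec_surjective_iff_isUnit]
  show Function.Surjective M.mulVecLin
  rw [← LinearMap.range_eq_top]
  apply Submodule.eq_top_of_finrank_eq
  rw [← rank, h, Module.finrank_fintype_fun_eq_card]

theorem Matrix.exists_leftInverse_of_rank_eq_card {m n R : Type*} [Fintype m] [Fintype n]
    [DecidableEq n] [Field R] [LinearOrder R] [IsStrictOrderedRing R]
    {A : Matrix m n R} (hA : A.rank = Fintype.card n) :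
    ∃ B : Matrix n m R, B * A = 1 ∧ (A * B)ᵀ = A * B := by
  have hG : IsUnit (Aᵀ * A).det :=
    (isUnit_iff_isUnit_det _).mp (isUnit_of_rank_eq_card (by rw [rank_transpose_mul_self, hA]))
  refine ⟨(Aᵀ * A)⁻¹ * Aᵀ, by rw [Matrix.mul_assoc, nonsing_inv_mul _ hG], ?_⟩
  rw [← Matrix.mul_assoc, transpose_mul, transpose_mul, transpose_transpose,
    transpose_nonsing_inv, transpose_mul, transpose_transpose, Matrix.mul_assoc]

open scoped Matrix.Norms.L2Operator in
theorem Matrix.l2_opNorm_mul_of_conjTranspose_mul_self_eq_one {𝕜 m n l : Type*} [RCLike 𝕜]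
    [Fintype m] [Fintype n] [DecidableEq n] [Fintype l] [DecidableEq l] {U : Matrix m n 𝕜}
    (hU : Uᴴ * U = 1) (A : Matrix n l 𝕜) : ‖U * A‖ = ‖A‖ := by
  rw [← mul_self_inj (norm_nonneg _) (norm_nonneg _), ← l2_opNorm_conjTranspose_mul_self,
    ← l2_opNorm_conjTranspose_mul_self, conjTranspose_mul, Matrix.mul_assoc,
    ← Matrix.mul_assoc Uᴴ, hU, Matrix.one_mul]

open scoped Matrix.Norms.L2Operator in
theorem specNorm_eq_l2_opNorm {m n : Type*} [Fintype m] [Fintype n] [DecidableEq n]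
    (A : Matrix m n ℝ) : specNorm A = ‖A‖ := rfl

theorem pinv_submatrix_qr_bound_general {m k l : ℕ} (Y U1 : Matrix (Fin m) (Fin k) ℝ)
    (R : Matrix (Fin k) (Fin k) ℝ) (hQR : Y = U1 * R) (hU1 : U1ᵀ * U1 = 1)
    (J : Fin l ↪ Fin m)
    (hJ : (Y.submatrix J id).rank = k) :
    specNorm (pinv (U1.submatrix J id)) ≤
      specNorm (pinv (Y.submatrix J id)) * specNorm Y := by
  obtain ⟨B, hBY, hYB⟩ := exists_leftInverse_of_rank_eq_card (by rwa [Fintype.card_fin])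
  have hYJ : Y.submatrix J id = U1.submatrix J id * R := by
    rw [hQR, submatrix_mul _ _ _ _ _ Function.bijective_id, submatrix_id_id]
  open scoped Matrix.Norms.L2Operator in
  have hRY : ‖R‖ = ‖Y‖ := by
    rw [hQR, l2_opNorm_mul_of_conjTranspose_mul_self_eq_one
      (by rwa [conjTranspose_eq_transpose_of_trivial])]
  rw [pinv_eq_of_mul_eq_one hBY hYB]
  rw [hYJ] at hBY hYB
  rw [pinv_eq_mul_of_mul_mul_eq_one hBY hYB]
  open scoped Matrix.Norms.L2Operator in
  simpa only [specNorm_eq_l2_opNorm, hRY, mul_comm ‖Y‖] using l2_opNorm_mul R B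

theorem pinv_submatrix_qr_bound {m k l : ℕ} (Y U1 : Matrix (Fin m) (Fin k) ℝ)
    (R : Matrix (Fin k) (Fin k) ℝ) (hQR : Y = U1 * R) (hU1 : U1ᵀ * U1 = 1)
    (hR : IsUnit R) (hYrank : Y.rank = k) (J : Fin l ↪ Fin m)
    (hJ : (Y.submatrix J id).rank = k) :
    specNorm (pinv (U1.submatrix J id)) ≤
      specNorm (pinv (Y.submatrix J id)) * specNorm Y :=
  pinv_submatrix_qr_bound_general Y U1 R hQR hU1 J hJ
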